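/- The span of the Roth basis functions {B_j^n : j = 1, …, 2n+1} equals the space of trigonometric polynomials of degree at most n, i.e., span{1, cos(kt), sin(kt) : 1 ≤ k ≤ n}. -/

import Mathlib

open Real

noncomputable def rothH (n : ℕ) : ℝ :=
  ((2 ^ n * Nat.factorial n : ℝ)) ^ 2 / (Nat.factorial (2 * n + 1) : ℝ)

noncomputable def rothBasis (n j : ℕ) (t : ℝ) : ℝ :=
  (rothH n / 2 ^ n) * (1 + Real.cos (t + 2 * π * ((j : ℝ) - 1) / (2 * n + 1))) ^ n



open Finset

noncomputable def phif (n j : ℕ) : ℝ := 2 * π * j / (2 * n + 1)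

lemma sum_exp (n : ℕ) (c : ℤ) :
    ∑ j ∈ range (2*n+1), Complex.exp ((((c:ℝ) * phif n j : ℝ)) * Complex.I)
      = if ((2*n+1 : ℕ) : ℤ) ∣ c then ((2*n+1 : ℕ) : ℂ) else 0 := by
  have hN : ((2*n+1 : ℕ) : ℂ) ≠ 0 := Nat.cast_ne_zero.mpr (by omega)
  set w : ℂ := (c : ℂ) * (2 * (π:ℂ) * Complex.I) / ((2*n+1 : ℕ) : ℂ) with hw
  have h2 : (2 * (π:ℂ) * Complex.I) ≠ 0 := by
    simp [Complex.I_ne_zero, Complex.ofReal_ne_zero, Real.pi_ne_zero]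
  have hterm : ∀ j ∈ range (2*n+1),
      Complex.exp ((((c:ℝ) * phif n j : ℝ)) * Complex.I) = (Complex.exp w) ^ j := by
    intro j _
    rw [← Complex.exp_nat_mul]
    congr 1
    rw [hw]
    unfold phif
    push_cast
    field_simp [phif]
  rw [Finset.sum_congr rfl hterm]
  by_cases hdvd : ((2*n+1 : ℕ) : ℤ) ∣ c
  · rw [if_pos hdvd]
    obtain ⟨d, hd⟩ := hdvd
    have hw1 : Complex.exp w = 1 := by
      have hww : w = (d : ℂ) * (2 * π * Complex.I) := by
        rw [hw, hd]
        push_cast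
        rw [mul_comm ((2:ℂ)*(n:ℂ)+1) (d:ℂ), mul_assoc, mul_div_assoc]
        congr 1
        rw [mul_div_cancel_left₀]
        exact_mod_cast hN
      rw [hww, Complex.exp_int_mul_two_pi_mul_I]
    simp [hw1]
  · rw [if_neg hdvd]
    have hx : Complex.exp w ≠ 1 := by
      intro h
      obtain ⟨m, hm⟩ := Complex.exp_eq_one_iff.mp h
      apply hdvd
      rw [hw, div_eq_iff hN] at hm
      have h3 : (c:ℂ) * (2*(π:ℂ)*Complex.I) = ((m * (2*n+1 : ℕ) : ℤ):ℂ) * (2*(π:ℂ)*Complex.I) := by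
        push_cast at hm ⊢
        linear_combination hm
      have h4 : (c:ℂ) = ((m * (2*n+1 : ℕ) : ℤ):ℂ) := mul_right_cancel₀ h2 h3
      have h5 : c = m * ((2*n+1 : ℕ):ℤ) := by exact_mod_cast h4
      exact ⟨m, by rw [h5]; ring⟩
    rw [geom_sum_eq hx]
    have hxN : Complex.exp w ^ (2*n+1) = 1 := by
      rw [← Complex.exp_nat_mul]
      have harg : ((2*n+1 : ℕ) : ℂ) * w = (c:ℂ) * (2 * π * Complex.I) := by
        rw [hw]
        exact mul_div_cancel₀ _ hN
      rw [harg, Complex.exp_int_mul_two_pi_mul_I]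
    rw [hxN]
    simp


lemma sum_cos (n : ℕ) (c : ℤ) :
    ∑ j ∈ range (2*n+1), Real.cos ((c:ℝ) * phif n j)
      = if ((2*n+1 : ℕ) : ℤ) ∣ c then ((2*n+1 : ℕ) : ℝ) else 0 := by
  have h := congrArg Complex.re (sum_exp n c)
  rw [Complex.re_sum] at h
  simp only [Complex.exp_ofReal_mul_I_re] at h
  rw [h]
  split_ifs <;> simp

lemma sum_sin (n : ℕ) (c : ℤ) :
    ∑ j ∈ range (2*n+1), Real.sin ((c:ℝ) * phif n j) = 0 := by
  have h := congrArg Complex.im (sum_exp n c)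
  rw [Complex.im_sum] at h
  simp only [Complex.exp_ofReal_mul_I_im] at h
  rw [h]
  split_ifs <;> simp

lemma expand (n : ℕ) (x : ℝ) :
    (1 + Real.cos x)^n
      = (2^n : ℝ)⁻¹ * ∑ m ∈ range (2*n+1),
          (Nat.choose (2*n) m : ℝ) * Real.cos (((m:ℝ) - n) * x) := by
  set z : ℂ := Complex.exp ((x:ℝ) * Complex.I) with hzdef
  have hz : z ≠ 0 := Complex.exp_ne_zero _
  have hzcs : z = (Real.cos x : ℂ) + (Real.sin x : ℂ) * Complex.I := by
    rw [hzdef, Complex.exp_mul_I, Complex.ofReal_cos, Complex.ofReal_sin]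
  have hcs : (Real.cos x : ℂ)^2 + (Real.sin x : ℂ)^2 = 1 := by
    norm_cast
    exact Real.cos_sq_add_sin_sq x
  have key : (1 + z)^2 = 2 * z * (1 + (Real.cos x : ℂ)) := by
    rw [hzcs]
    linear_combination (-1 : ℂ) * hcs + (Real.sin x : ℂ)^2 * Complex.I_sq
  have key2 : ((1:ℂ) + (Real.cos x : ℂ))^n = ((2:ℂ)^n * z^n)⁻¹ * (1+z)^(2*n) := by
    rw [pow_mul, key, mul_pow, mul_pow]
    field_simp
  have binom : (1+z)^(2*n) = ∑ m ∈ range (2*n+1), (Nat.choose (2*n) m : ℂ) * z^m := by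
    rw [add_comm, add_pow]
    apply Finset.sum_congr rfl
    intro m _
    simp
    ring
  have final : ((((1 + Real.cos x)^n : ℝ)) : ℂ)
      = (((2^n : ℝ)⁻¹ : ℝ) : ℂ) * ∑ m ∈ range (2*n+1),
          (((Nat.choose (2*n) m : ℝ)) : ℂ)
            * Complex.exp (((((m:ℝ) - n) * x : ℝ)) * Complex.I) := by
    rw [Complex.ofReal_pow, Complex.ofReal_add, Complex.ofReal_one, key2, binom]
    have hc2 : (((2^n : ℝ)⁻¹ : ℝ) : ℂ) = ((2:ℂ)^n)⁻¹ := by push_cast; ring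
    rw [hc2, mul_inv, mul_assoc, Finset.mul_sum]
    congr 1
    apply Finset.sum_congr rfl
    intro m _
    have hexp : Complex.exp (((((m:ℝ) - n) * x : ℝ)) * Complex.I) = z^m * (z^n)⁻¹ := by
      rw [hzdef, ← Complex.exp_nat_mul, ← Complex.exp_nat_mul, ← Complex.exp_neg,
        ← Complex.exp_add]
      congr 1
      push_cast
      ring
    rw [hexp]
    push_cast
    ring
  have hre := congrArg Complex.re final
  rw [Complex.ofReal_re, Complex.re_ofReal_mul, Complex.re_sum] at hre
  simp only [Complex.re_ofReal_mul, Complex.exp_ofReal_mul_I_re] at hre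
  exact hre

lemma rothH_pos (n : ℕ) : 0 < rothH n := by
  unfold rothH
  positivity

lemma roth_expand (n j : ℕ) (t : ℝ) :
    rothBasis n (j+1) t
      = (rothH n / 4^n) * ∑ m ∈ range (2*n+1),
          (Nat.choose (2*n) m : ℝ) * Real.cos (((m:ℝ) - n) * (t + phif n j)) := by
  unfold rothBasis
  have harg : t + 2 * π * (((j+1 : ℕ) : ℝ) - 1) / (2 * n + 1) = t + phif n j := by
    unfold phif; push_cast; ring
  rw [harg, expand]
  have h4 : (4:ℝ)^n = 2^n * 2^n := by rw [← mul_pow]; norm_num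
  rw [h4]
  have h2 : (2:ℝ)^n ≠ 0 := by positivity
  field_simp
  simp only [mul_comm (t + phif n j)]

section
variable (n : ℕ)

noncomputable def Tspan (n : ℕ) : Submodule ℝ (ℝ → ℝ) :=
  Submodule.span ℝ
    ({fun _ : ℝ => (1 : ℝ)} ∪
      {f : ℝ → ℝ | ∃ k : ℕ, 1 ≤ k ∧ k ≤ n ∧
        ((f = fun t => Real.cos (k * t)) ∨ (f = fun t => Real.sin (k * t)))})

lemma mem_cos_int (b : ℤ) (hb : b.natAbs ≤ n) :
    (fun t : ℝ => Real.cos ((b:ℝ) * t)) ∈ Tspan n := by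
  rcases Nat.eq_zero_or_pos b.natAbs with h0 | hpos
  · have : b = 0 := Int.natAbs_eq_zero.mp h0
    subst this
    have : (fun t : ℝ => Real.cos ((0:ℤ) * t)) = (fun _ : ℝ => (1:ℝ)) := by
      funext t; simp
    rw [this]
    exact Submodule.subset_span (Or.inl rfl)
  · set k := b.natAbs with hk
    have hfun : (fun t : ℝ => Real.cos ((b:ℝ) * t)) = (fun t : ℝ => Real.cos ((k:ℝ) * t)) := by
      funext t
      rcases Int.natAbs_eq b with h | h
      · rw [h, Int.cast_natCast]
      · rw [h, Int.cast_neg, Int.cast_natCast, neg_mul, Real.cos_neg]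
    rw [hfun]
    exact Submodule.subset_span (Or.inr ⟨k, hpos, hb, Or.inl rfl⟩)

lemma mem_sin_int (b : ℤ) (hb : b.natAbs ≤ n) :
    (fun t : ℝ => Real.sin ((b:ℝ) * t)) ∈ Tspan n := by
  rcases Nat.eq_zero_or_pos b.natAbs with h0 | hpos
  · have : b = 0 := Int.natAbs_eq_zero.mp h0
    subst this
    have : (fun t : ℝ => Real.sin ((0:ℤ) * t)) = (0 : ℝ → ℝ) := by
      funext t; simp
    rw [this]
    exact Submodule.zero_mem _
  · set k := b.natAbs with hk
    rcases Int.natAbs_eq b with h | h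
    · have hfun : (fun t : ℝ => Real.sin ((b:ℝ) * t)) = (fun t : ℝ => Real.sin ((k:ℝ) * t)) := by
        funext t; rw [h, Int.cast_natCast]
      rw [hfun]
      exact Submodule.subset_span (Or.inr ⟨k, hpos, hb, Or.inr rfl⟩)
    · have hfun : (fun t : ℝ => Real.sin ((b:ℝ) * t))
          = (-1 : ℝ) • (fun t : ℝ => Real.sin ((k:ℝ) * t)) := by
        funext t
        rw [h, Int.cast_neg, Int.cast_natCast, neg_mul, Real.sin_neg]
        simp [Pi.smul_apply, hk]
      rw [hfun]
      exact Submodule.smul_mem _ _ (Submodule.subset_span (Or.inr ⟨k, hpos, hb, Or.inr rfl⟩))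

lemma B_mem_Tspan (j : ℕ) : (fun t : ℝ => rothBasis n (j+1) t) ∈ Tspan n := by
  have hfun : (fun t : ℝ => rothBasis n (j+1) t)
      = ∑ m ∈ range (2*n+1),
          (((rothH n / 4^n) * (Nat.choose (2*n) m : ℝ)
              * Real.cos ((((m:ℤ) - n : ℤ) : ℝ) * phif n j))
            • (fun t : ℝ => Real.cos ((((m:ℤ) - n : ℤ):ℝ) * t))
          - ((rothH n / 4^n) * (Nat.choose (2*n) m : ℝ)
              * Real.sin ((((m:ℤ) - n : ℤ):ℝ) * phif n j))
            • (fun t : ℝ => Real.sin ((((m:ℤ) - n : ℤ):ℝ) * t))) := by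
    funext t
    rw [Finset.sum_apply, roth_expand, Finset.mul_sum]
    apply Finset.sum_congr rfl
    intro m _
    simp only [Pi.sub_apply, Pi.smul_apply, smul_eq_mul]
    have hb : (((m:ℤ) - n : ℤ) : ℝ) = (m:ℝ) - n := by push_cast; ring
    rw [hb]
    rw [show ((m:ℝ) - n) * (t + phif n j) = ((m:ℝ)-n)*t + ((m:ℝ)-n)*phif n j by ring,
      Real.cos_add]
    ring
  rw [hfun]
  refine Submodule.sum_mem _ fun m hm => Submodule.sub_mem _
    (Submodule.smul_mem _ _ (mem_cos_int n _ ?_))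
    (Submodule.smul_mem _ _ (mem_sin_int n _ ?_)) <;>
  · simp only [Finset.mem_range] at hm
    omega
end

lemma inner_cos (n : ℕ) (c b : ℤ) (t : ℝ) :
    ∑ j ∈ range (2*n+1), Real.cos ((c:ℝ) * phif n j) * Real.cos ((b:ℝ) * (t + phif n j))
      = Real.cos ((b:ℝ)*t) *
          ((if ((2*n+1:ℕ):ℤ) ∣ (c+b) then ((2*n+1:ℕ):ℝ) else 0)
            + (if ((2*n+1:ℕ):ℤ) ∣ (c-b) then ((2*n+1:ℕ):ℝ) else 0)) / 2 := by
  have hpt : ∀ j ∈ range (2*n+1),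
      Real.cos ((c:ℝ) * phif n j) * Real.cos ((b:ℝ) * (t + phif n j))
        = (Real.cos ((b:ℝ)*t) * (Real.cos (((c+b:ℤ):ℝ) * phif n j) + Real.cos (((c-b:ℤ):ℝ) * phif n j))
            - Real.sin ((b:ℝ)*t) * (Real.sin (((c+b:ℤ):ℝ) * phif n j) - Real.sin (((c-b:ℤ):ℝ) * phif n j))) / 2 := by
    intro j _
    push_cast
    rw [mul_add (b:ℝ), Real.cos_add ((b:ℝ)*t), add_mul, Real.cos_add, sub_mul, Real.cos_sub,
      Real.sin_add, Real.sin_sub]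
    ring
  rw [Finset.sum_congr rfl hpt, ← Finset.sum_div, Finset.sum_sub_distrib,
    ← Finset.mul_sum, ← Finset.mul_sum, Finset.sum_add_distrib, Finset.sum_sub_distrib,
    _root_.sum_cos, _root_.sum_cos, _root_.sum_sin, _root_.sum_sin]
  ring

lemma inner_sin (n : ℕ) (c b : ℤ) (t : ℝ) :
    ∑ j ∈ range (2*n+1), Real.sin ((c:ℝ) * phif n j) * Real.cos ((b:ℝ) * (t + phif n j))
      = - Real.sin ((b:ℝ)*t) *
          ((if ((2*n+1:ℕ):ℤ) ∣ (c-b) then ((2*n+1:ℕ):ℝ) else 0)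
            - (if ((2*n+1:ℕ):ℤ) ∣ (c+b) then ((2*n+1:ℕ):ℝ) else 0)) / 2 := by
  have hpt : ∀ j ∈ range (2*n+1),
      Real.sin ((c:ℝ) * phif n j) * Real.cos ((b:ℝ) * (t + phif n j))
        = (Real.cos ((b:ℝ)*t) * (Real.sin (((c+b:ℤ):ℝ) * phif n j) + Real.sin (((c-b:ℤ):ℝ) * phif n j))
            - Real.sin ((b:ℝ)*t) * (Real.cos (((c-b:ℤ):ℝ) * phif n j) - Real.cos (((c+b:ℤ):ℝ) * phif n j))) / 2 := by
    intro j _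
    push_cast
    rw [mul_add (b:ℝ), Real.cos_add ((b:ℝ)*t), add_mul, Real.cos_add, sub_mul, Real.cos_sub,
      Real.sin_add, Real.sin_sub]
    ring
  rw [Finset.sum_congr rfl hpt, ← Finset.sum_div, Finset.sum_sub_distrib,
    ← Finset.mul_sum, ← Finset.mul_sum, Finset.sum_add_distrib, Finset.sum_sub_distrib,
    _root_.sum_cos, _root_.sum_cos, _root_.sum_sin, _root_.sum_sin]
  ring

-- not divisible helper
lemma not_dvd_helper (n : ℕ) (a : ℤ) (h0 : a ≠ 0) (hb : a.natAbs ≤ 2*n) :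
    ¬ ((2*n+1 : ℕ) : ℤ) ∣ a := by
  intro h
  have := Int.eq_zero_of_dvd_of_natAbs_lt_natAbs h (by omega)
  exact h0 this

-- generic reduction step: sum over j of w j * B j t
lemma swap_step (n : ℕ) (w : ℕ → ℝ) (t : ℝ) :
    ∑ j ∈ range (2*n+1), w j * rothBasis n (j+1) t
      = ∑ m ∈ range (2*n+1), (rothH n / 4^n) * (Nat.choose (2*n) m : ℝ) *
          ∑ j ∈ range (2*n+1), w j * Real.cos ((((m:ℤ) - n : ℤ):ℝ) * (t + phif n j)) := by
  have h1 : ∀ j ∈ range (2*n+1), w j * rothBasis n (j+1) t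
      = ∑ m ∈ range (2*n+1), (rothH n / 4^n) * (Nat.choose (2*n) m : ℝ) *
          (w j * Real.cos ((((m:ℤ) - n : ℤ):ℝ) * (t + phif n j))) := by
    intro j _
    rw [roth_expand, Finset.mul_sum, Finset.mul_sum]
    apply Finset.sum_congr rfl
    intro m _
    have hb : (((m:ℤ) - n : ℤ) : ℝ) = (m:ℝ) - n := by push_cast; ring
    rw [hb]
    ring
  rw [Finset.sum_congr rfl h1, Finset.sum_comm]
  apply Finset.sum_congr rfl
  intro m _
  rw [← Finset.mul_sum]

lemma keyCos (n c : ℕ) (hc1 : 1 ≤ c) (hc : c ≤ n) (t : ℝ) :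
    ∑ j ∈ range (2*n+1), Real.cos ((c:ℝ) * phif n j) * rothBasis n (j+1) t
      = (rothH n / 4^n) * ((2*n+1 : ℕ) : ℝ) * (Nat.choose (2*n) (n+c) : ℝ)
          * Real.cos ((c:ℝ) * t) := by
  have hw : ∀ j, Real.cos ((c:ℝ) * phif n j) = Real.cos (((c:ℤ):ℝ) * phif n j) := by
    intro j; norm_cast
  calc ∑ j ∈ range (2*n+1), Real.cos ((c:ℝ) * phif n j) * rothBasis n (j+1) t
      = ∑ m ∈ range (2*n+1), (rothH n / 4^n) * (Nat.choose (2*n) m : ℝ) *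
          ∑ j ∈ range (2*n+1), Real.cos (((c:ℤ):ℝ) * phif n j)
            * Real.cos ((((m:ℤ) - n : ℤ):ℝ) * (t + phif n j)) := by
        simp only [← hw]
        exact swap_step n _ t
    _ = ∑ m ∈ range (2*n+1), (rothH n / 4^n) * (Nat.choose (2*n) m : ℝ) *
          (Real.cos ((((m:ℤ) - n : ℤ):ℝ)*t) *
            ((if ((2*n+1:ℕ):ℤ) ∣ ((c:ℤ)+((m:ℤ)-n)) then ((2*n+1:ℕ):ℝ) else 0)
              + (if ((2*n+1:ℕ):ℤ) ∣ ((c:ℤ)-((m:ℤ)-n)) then ((2*n+1:ℕ):ℝ) else 0)) / 2) := by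
        apply Finset.sum_congr rfl
        intro m _
        rw [inner_cos]
    _ = ∑ m ∈ ({n-c, n+c} : Finset ℕ), (rothH n / 4^n) * (Nat.choose (2*n) m : ℝ) *
          (Real.cos ((((m:ℤ) - n : ℤ):ℝ)*t) *
            ((if ((2*n+1:ℕ):ℤ) ∣ ((c:ℤ)+((m:ℤ)-n)) then ((2*n+1:ℕ):ℝ) else 0)
              + (if ((2*n+1:ℕ):ℤ) ∣ ((c:ℤ)-((m:ℤ)-n)) then ((2*n+1:ℕ):ℝ) else 0)) / 2) := by
        refine (Finset.sum_subset ?_ ?_).symm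
        · intro m hm
          simp only [Finset.mem_insert, Finset.mem_singleton] at hm
          rcases hm with rfl | rfl <;> (rw [Finset.mem_range]; omega)
        · intro m hm hnot
          simp only [Finset.mem_insert, Finset.mem_singleton, not_or] at hnot
          rw [Finset.mem_range] at hm
          rw [if_neg (not_dvd_helper n _ (by omega) (by omega))]
          rw [if_neg (not_dvd_helper n _ (by omega) (by omega))]
          ring
    _ = (rothH n / 4^n) * ((2*n+1 : ℕ) : ℝ) * (Nat.choose (2*n) (n+c) : ℝ)
          * Real.cos ((c:ℝ) * t) := by
        rw [Finset.sum_pair (by omega : n - c ≠ n + c)]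
        have e1 : (((n-c : ℕ):ℤ) - n : ℤ) = -(c:ℤ) := by omega
        have e2 : (((n+c : ℕ):ℤ) - n : ℤ) = (c:ℤ) := by omega
        rw [e1, e2]
        rw [if_pos (show ((2*n+1:ℕ):ℤ) ∣ ((c:ℤ) + -(c:ℤ)) by simp)]
        rw [if_neg (not_dvd_helper n _ (by omega) (by omega))]
        rw [if_neg (not_dvd_helper n _ (by omega) (by omega))]
        rw [if_pos (show ((2*n+1:ℕ):ℤ) ∣ ((c:ℤ) - (c:ℤ)) by simp)]
        have hch : (Nat.choose (2*n) (n-c) : ℝ) = (Nat.choose (2*n) (n+c) : ℝ) := by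
          norm_cast
          rw [show n - c = 2*n - (n+c) by omega]
          exact Nat.choose_symm (by omega)
        have hcos : Real.cos (((-(c:ℤ) : ℤ) : ℝ) * t) = Real.cos ((c:ℝ)*t) := by
          push_cast
          rw [neg_mul, Real.cos_neg]
        rw [hch, hcos]
        push_cast
        ring

lemma keySin (n c : ℕ) (hc1 : 1 ≤ c) (hc : c ≤ n) (t : ℝ) :
    ∑ j ∈ range (2*n+1), Real.sin ((c:ℝ) * phif n j) * rothBasis n (j+1) t
      = -((rothH n / 4^n) * ((2*n+1 : ℕ) : ℝ) * (Nat.choose (2*n) (n+c) : ℝ))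
          * Real.sin ((c:ℝ) * t) := by
  have hw : ∀ j, Real.sin ((c:ℝ) * phif n j) = Real.sin (((c:ℤ):ℝ) * phif n j) := by
    intro j; norm_cast
  calc ∑ j ∈ range (2*n+1), Real.sin ((c:ℝ) * phif n j) * rothBasis n (j+1) t
      = ∑ m ∈ range (2*n+1), (rothH n / 4^n) * (Nat.choose (2*n) m : ℝ) *
          ∑ j ∈ range (2*n+1), Real.sin (((c:ℤ):ℝ) * phif n j)
            * Real.cos ((((m:ℤ) - n : ℤ):ℝ) * (t + phif n j)) := by
        simp only [← hw]
        exact swap_step n _ t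
    _ = ∑ m ∈ range (2*n+1), (rothH n / 4^n) * (Nat.choose (2*n) m : ℝ) *
          (- Real.sin ((((m:ℤ) - n : ℤ):ℝ)*t) *
            ((if ((2*n+1:ℕ):ℤ) ∣ ((c:ℤ)-((m:ℤ)-n)) then ((2*n+1:ℕ):ℝ) else 0)
              - (if ((2*n+1:ℕ):ℤ) ∣ ((c:ℤ)+((m:ℤ)-n)) then ((2*n+1:ℕ):ℝ) else 0)) / 2) := by
        apply Finset.sum_congr rfl
        intro m _
        rw [inner_sin]
    _ = ∑ m ∈ ({n-c, n+c} : Finset ℕ), (rothH n / 4^n) * (Nat.choose (2*n) m : ℝ) *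
          (- Real.sin ((((m:ℤ) - n : ℤ):ℝ)*t) *
            ((if ((2*n+1:ℕ):ℤ) ∣ ((c:ℤ)-((m:ℤ)-n)) then ((2*n+1:ℕ):ℝ) else 0)
              - (if ((2*n+1:ℕ):ℤ) ∣ ((c:ℤ)+((m:ℤ)-n)) then ((2*n+1:ℕ):ℝ) else 0)) / 2) := by
        refine (Finset.sum_subset ?_ ?_).symm
        · intro m hm
          simp only [Finset.mem_insert, Finset.mem_singleton] at hm
          rcases hm with rfl | rfl <;> (rw [Finset.mem_range]; omega)
        · intro m hm hnot
          simp only [Finset.mem_insert, Finset.mem_singleton, not_or] at hnot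
          rw [Finset.mem_range] at hm
          rw [if_neg (not_dvd_helper n _ (by omega) (by omega))]
          rw [if_neg (not_dvd_helper n _ (by omega) (by omega))]
          ring
    _ = -((rothH n / 4^n) * ((2*n+1 : ℕ) : ℝ) * (Nat.choose (2*n) (n+c) : ℝ))
          * Real.sin ((c:ℝ) * t) := by
        rw [Finset.sum_pair (by omega : n - c ≠ n + c)]
        have e1 : (((n-c : ℕ):ℤ) - n : ℤ) = -(c:ℤ) := by omega
        have e2 : (((n+c : ℕ):ℤ) - n : ℤ) = (c:ℤ) := by omega
        rw [e1, e2]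
        rw [if_neg (not_dvd_helper n _ (by omega) (by omega))]
        rw [if_pos (show ((2*n+1:ℕ):ℤ) ∣ ((c:ℤ) + -(c:ℤ)) by simp)]
        rw [if_pos (show ((2*n+1:ℕ):ℤ) ∣ ((c:ℤ) - (c:ℤ)) by simp)]
        rw [if_neg (not_dvd_helper n _ (by omega) (by omega))]
        have hch : (Nat.choose (2*n) (n-c) : ℝ) = (Nat.choose (2*n) (n+c) : ℝ) := by
          norm_cast
          rw [show n - c = 2*n - (n+c) by omega]
          exact Nat.choose_symm (by omega)
        have hsin : Real.sin (((-(c:ℤ) : ℤ) : ℝ) * t) = - Real.sin ((c:ℝ)*t) := by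
          push_cast
          rw [neg_mul, Real.sin_neg]
        rw [hch, hsin]
        push_cast
        ring

lemma keyConst (n : ℕ) (t : ℝ) :
    ∑ j ∈ range (2*n+1), rothBasis n (j+1) t
      = (rothH n / 4^n) * ((2*n+1 : ℕ) : ℝ) * (Nat.choose (2*n) n : ℝ) := by
  have h0 : ∀ j ∈ range (2*n+1), rothBasis n (j+1) t
      = Real.cos (((0:ℤ):ℝ) * phif n j) * rothBasis n (j+1) t := by
    intro j _; norm_num
  calc ∑ j ∈ range (2*n+1), rothBasis n (j+1) t
      = ∑ m ∈ range (2*n+1), (rothH n / 4^n) * (Nat.choose (2*n) m : ℝ) *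
          ∑ j ∈ range (2*n+1), Real.cos (((0:ℤ):ℝ) * phif n j)
            * Real.cos ((((m:ℤ) - n : ℤ):ℝ) * (t + phif n j)) := by
        rw [Finset.sum_congr rfl h0]
        exact swap_step n _ t
    _ = ∑ m ∈ range (2*n+1), (rothH n / 4^n) * (Nat.choose (2*n) m : ℝ) *
          (Real.cos ((((m:ℤ) - n : ℤ):ℝ)*t) *
            ((if ((2*n+1:ℕ):ℤ) ∣ ((0:ℤ)+((m:ℤ)-n)) then ((2*n+1:ℕ):ℝ) else 0)
              + (if ((2*n+1:ℕ):ℤ) ∣ ((0:ℤ)-((m:ℤ)-n)) then ((2*n+1:ℕ):ℝ) else 0)) / 2) := by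
        apply Finset.sum_congr rfl
        intro m _
        rw [inner_cos]
    _ = (rothH n / 4^n) * ((2*n+1 : ℕ) : ℝ) * (Nat.choose (2*n) n : ℝ) := by
        rw [Finset.sum_eq_single_of_mem n (by rw [Finset.mem_range]; omega)]
        · rw [show ((n:ℤ) - n : ℤ) = 0 by ring]
          rw [if_pos (by simp), if_pos (by simp)]
          push_cast
          norm_num
          ring
        · intro m hm hne
          rw [Finset.mem_range] at hm
          rw [if_neg (not_dvd_helper n _ (by omega) (by omega))]
          rw [if_neg (not_dvd_helper n _ (by omega) (by omega))]
          ring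


theorem rothBasis_span (n : ℕ) (hn : 1 ≤ n) :
    Submodule.span ℝ
        (Set.range fun j : Fin (2 * n + 1) => fun t : ℝ => rothBasis n ((j : ℕ) + 1) t) =
      Submodule.span ℝ
        ({fun _ : ℝ => (1 : ℝ)} ∪
          {f : ℝ → ℝ | ∃ k : ℕ, 1 ≤ k ∧ k ≤ n ∧
            ((f = fun t => Real.cos (k * t)) ∨ (f = fun t => Real.sin (k * t)))}) := by
  apply le_antisymm
  · rw [Submodule.span_le]
    rintro f ⟨j, rfl⟩
    exact B_mem_Tspan n (j : ℕ)
  · rw [Submodule.span_le]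
    intro f hf
    have hBmem : ∀ j ∈ range (2*n+1),
        (fun t : ℝ => rothBasis n (j+1) t) ∈
          Submodule.span ℝ
            (Set.range fun j : Fin (2 * n + 1) => fun t : ℝ => rothBasis n ((j : ℕ) + 1) t) := by
      intro j hj
      exact Submodule.subset_span ⟨⟨j, Finset.mem_range.mp hj⟩, rfl⟩
    have hR : 0 < rothH n / 4^n := div_pos (rothH_pos n) (by positivity)
    have hN : (0:ℝ) < ((2*n+1 : ℕ) : ℝ) := by positivity
    rcases hf with hf | ⟨k, hk1, hk2, hf | hf⟩
    · -- constant function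
      rw [Set.mem_singleton_iff] at hf
      subst hf
      set K : ℝ := (rothH n / 4^n) * ((2*n+1 : ℕ) : ℝ) * (Nat.choose (2*n) n : ℝ) with hK
      have hCpos : (0:ℝ) < (Nat.choose (2*n) n : ℝ) := by
        exact_mod_cast Nat.choose_pos (by omega : n ≤ 2*n)
      have hKne : K ≠ 0 := by positivity
      have hfun : (fun _ : ℝ => (1:ℝ))
          = K⁻¹ • ∑ j ∈ range (2*n+1), (fun t : ℝ => rothBasis n (j+1) t) := by
        funext t
        simp only [Pi.smul_apply, Finset.sum_apply, smul_eq_mul]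
        rw [keyConst, ← hK, inv_mul_cancel₀ hKne]
      rw [hfun]
      exact Submodule.smul_mem _ _ (Submodule.sum_mem _ hBmem)
    · -- cosine
      subst hf
      set K : ℝ := (rothH n / 4^n) * ((2*n+1 : ℕ) : ℝ) * (Nat.choose (2*n) (n+k) : ℝ) with hK
      have hCpos : (0:ℝ) < (Nat.choose (2*n) (n+k) : ℝ) := by
        exact_mod_cast Nat.choose_pos (by omega : n + k ≤ 2*n)
      have hKne : K ≠ 0 := by positivity
      have hfun : (fun t : ℝ => Real.cos ((k:ℝ) * t))
          = K⁻¹ • ∑ j ∈ range (2*n+1),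
              Real.cos ((k:ℝ) * phif n j) • (fun t : ℝ => rothBasis n (j+1) t) := by
        funext t
        simp only [Pi.smul_apply, Finset.sum_apply, smul_eq_mul]
        rw [keyCos n k hk1 hk2, ← hK, ← mul_assoc, inv_mul_cancel₀ hKne, one_mul]
      rw [hfun]
      exact Submodule.smul_mem _ _ (Submodule.sum_mem _
        (fun j hj => Submodule.smul_mem _ _ (hBmem j hj)))
    · -- sine
      subst hf
      set K : ℝ := (rothH n / 4^n) * ((2*n+1 : ℕ) : ℝ) * (Nat.choose (2*n) (n+k) : ℝ) with hK
      have hCpos : (0:ℝ) < (Nat.choose (2*n) (n+k) : ℝ) := by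
        exact_mod_cast Nat.choose_pos (by omega : n + k ≤ 2*n)
      have hKne : (-K) ≠ 0 := neg_ne_zero.mpr (by positivity)
      have hfun : (fun t : ℝ => Real.sin ((k:ℝ) * t))
          = (-K)⁻¹ • ∑ j ∈ range (2*n+1),
              Real.sin ((k:ℝ) * phif n j) • (fun t : ℝ => rothBasis n (j+1) t) := by
        funext t
        simp only [Pi.smul_apply, Finset.sum_apply, smul_eq_mul]
        rw [keySin n k hk1 hk2, ← hK, ← mul_assoc, inv_mul_cancel₀ hKne, one_mul]
      rw [hfun]
      exact Submodule.smul_mem _ _ (Submodule.sum_mem _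
        (fun j hj => Submodule.smul_mem _ _ (hBmem j hj)))
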